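/- Let r > 1/2. There exists a constant c > 0, depending only on r, such that for every τ ≥ 0 and all sequences α, β : ℤ → ℂ with ‖α‖_r < ∞ and ‖β‖_r < ∞, the sequence W : ℤ → ℂ defined by W_k = Σ_{k₁+k₂+k₃=k} ( conj(α_{k₁}) α_{k₂} α_{k₃} − conj(β_{k₁}) β_{k₂} β_{k₃} ) ∫₀^τ e^{2is k₂ k₃} ds (the inner sum over all (k₁,k₂,k₃) ∈ ℤ³ with k₁+k₂+k₃ = k converges absolutely) satisfies ‖W‖_r ≤ c τ (‖α‖_r + ‖β‖_r)² ‖α − β‖_r. (This is the Lipschitz estimate for the integral term J₂^τ of the second-order Fourier integrator, at the level of Fourier coefficients.) -/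

import Mathlib

/-!
Bounding the oscillatory integral by `τ` and telescoping the cubic difference, each coefficient
of `W` is dominated by `τ` times a sum of three triple convolutions of `|α|`, `|β|` and
`|α - β|`. Since `(1 + |k₁ + k₂ + k₃|) ^ r ≤ 3 ^ r * Σᵢ (1 + |kᵢ|) ^ r`, the weight can be moved
onto one factor of each convolution; that factor is estimated in the weighted `ℓ²` norm and the
other two in `ℓ¹` (Young's inequality `ℓ¹ * ℓ¹ * ℓ² → ℓ²`), and the `ℓ¹` norm is controlled by `‖·‖_r`
through Cauchy–Schwarz, because `Σ (1 + |k|) ^ (-2r) < ∞` for `r > 1/2`. Working with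
`ℝ≥0∞`-valued sequences throughout, no summability has to be tracked until the very end.
-/

/-- Weighted `H^r`-type norm of a sequence of Fourier coefficients. -/
noncomputable def wnorm (r : ℝ) (a : ℤ → ℂ) : ℝ :=
  Real.sqrt (∑' k : ℤ, (1 + |(k : ℝ)|) ^ (2 * r) * Norm.norm (a k) ^ 2)

open scoped ENNReal

namespace ENNReal

theorem sq_tsum_le_tsum_mul_tsum {ι : Type*} {x f g : ι → ℝ≥0∞}
    (h : ∀ i, x i ^ 2 ≤ f i * g i) : (∑' i, x i) ^ 2 ≤ (∑' i, f i) * ∑' i, g i := by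
  let _ : MeasurableSpace ι := ⊤
  have rpow_half_sq : ∀ y : ℝ≥0∞, (y ^ (1 / 2 : ℝ)) ^ (2 : ℝ) = y := fun y => by
    rw [← ENNReal.rpow_mul]; norm_num
  have hx : ∀ i, x i ≤ f i ^ (1 / 2 : ℝ) * g i ^ (1 / 2 : ℝ) := fun i => by
    rw [← ENNReal.mul_rpow_of_nonneg _ _ (by norm_num), ← ENNReal.rpow_le_rpow_iff two_pos,
      rpow_half_sq]
    exact_mod_cast h i
  have holder := ENNReal.lintegral_mul_le_Lp_mul_Lq MeasureTheory.Measure.count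
    Real.HolderConjugate.two_two
    (f := fun i => f i ^ (1 / 2 : ℝ)) (g := fun i => g i ^ (1 / 2 : ℝ))
    measurable_from_top.aemeasurable measurable_from_top.aemeasurable
  simp only [MeasureTheory.lintegral_count, Pi.mul_apply, rpow_half_sq] at holder
  calc (∑' i, x i) ^ 2 ≤ ((∑' i, f i) ^ (1 / 2 : ℝ) * (∑' i, g i) ^ (1 / 2 : ℝ)) ^ 2 :=
        pow_le_pow_left' ((ENNReal.tsum_le_tsum hx).trans holder) 2
    _ = (∑' i, f i) * ∑' i, g i := by
        rw [← ENNReal.rpow_natCast, ENNReal.mul_rpow_of_nonneg _ _ (by norm_num)]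
        exact_mod_cast congrArg₂ (· * ·) (rpow_half_sq _) (rpow_half_sq _)

theorem add_add_sq_le (a b c : ℝ≥0∞) : (a + b + c) ^ 2 ≤ 3 * (a ^ 2 + b ^ 2 + c ^ 2) := by
  have h := sq_tsum_le_tsum_mul_tsum (x := ![a, b, c]) (f := fun _ => 1)
    (g := fun i => ![a, b, c] i ^ 2) fun i => by rw [one_mul]
  simpa [tsum_fintype, Fin.sum_univ_three] using h

end ENNReal

theorem one_add_abs_add_add_rpow_le {r : ℝ} (hr : 0 ≤ r) (a b c : ℝ) :
    (1 + |a + b + c|) ^ r ≤ 3 ^ r * ((1 + |a|) ^ r + (1 + |b|) ^ r + (1 + |c|) ^ r) := by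
  have hM : 1 + |a + b + c| ≤ 3 * max (1 + |a|) (max (1 + |b|) (1 + |c|)) := by
    have := abs_add_three a b c
    have := le_max_left (1 + |a|) (max (1 + |b|) (1 + |c|))
    have := le_max_left (1 + |b|) (1 + |c|)
    have := le_max_right (1 + |b|) (1 + |c|)
    have := le_max_right (1 + |a|) (max (1 + |b|) (1 + |c|))
    linarith
  have ha : 0 ≤ (1 + |a|) ^ r := by positivity
  have hb : 0 ≤ (1 + |b|) ^ r := by positivity
  have hc : 0 ≤ (1 + |c|) ^ r := by positivity
  calc (1 + |a + b + c|) ^ r ≤ (3 * max (1 + |a|) (max (1 + |b|) (1 + |c|))) ^ r := by gcongr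
    _ = 3 ^ r * max ((1 + |a|) ^ r) (max ((1 + |b|) ^ r) ((1 + |c|) ^ r)) := by
        rw [Real.mul_rpow (by norm_num) (by positivity), Real.rpow_max (by positivity)
          (by positivity) hr, Real.rpow_max (by positivity) (by positivity) hr]
    _ ≤ _ := by gcongr; exact max_le (by linarith) (max_le (by linarith) (by linarith))

theorem enorm_mul_mul_sub_mul_mul_le {R : Type*} [NonUnitalNormedRing R] [NormMulClass R]
    (x₁ x₂ x₃ y₁ y₂ y₃ : R) :
    ‖x₁ * x₂ * x₃ - y₁ * y₂ * y₃‖ₑ ≤ ‖x₁ - y₁‖ₑ * ‖x₂‖ₑ * ‖x₃‖ₑ +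
      ‖y₁‖ₑ * ‖x₂ - y₂‖ₑ * ‖x₃‖ₑ + ‖y₁‖ₑ * ‖y₂‖ₑ * ‖x₃ - y₃‖ₑ := by
  rw [show x₁ * x₂ * x₃ - y₁ * y₂ * y₃ =
      (x₁ - y₁) * x₂ * x₃ + y₁ * (x₂ - y₂) * x₃ + y₁ * y₂ * (x₃ - y₃) by noncomm_ring]
  refine (enorm_add_le _ _).trans ?_
  grw [enorm_add_le ((x₁ - y₁) * x₂ * x₃)]
  simp only [enorm_mul, le_refl]

theorem norm_integral_exp_two_mul_I_le {τ : ℝ} (hτ : 0 ≤ τ) (n : ℤ) :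
    ‖∫ s in (0 : ℝ)..τ, Complex.exp (2 * Complex.I * s * (n : ℂ))‖ ≤ τ := by
  have hunit : ∀ s : ℝ, ‖Complex.exp (2 * Complex.I * s * (n : ℂ))‖ = 1 := fun s => by
    rw [show 2 * Complex.I * s * (n : ℂ) = ((2 * s * n : ℝ) : ℂ) * Complex.I by push_cast; ring]
    exact Complex.norm_exp_ofReal_mul_I _
  simpa [abs_of_nonneg hτ] using intervalIntegral.norm_integral_le_of_norm_le_const
    (a := 0) (b := τ) (C := 1) fun s _ => (hunit s).le

namespace FourierIntegrator

section TripleConvolution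

variable {G : Type*} [AddCommGroup G]

noncomputable def triConv (u v z : G → ℝ≥0∞) (k : G) : ℝ≥0∞ :=
  ∑' p : G × G, u p.1 * v p.2 * z (k - p.1 - p.2)

theorem triConv_rotate (u v z : G → ℝ≥0∞) (k : G) : triConv u v z k = triConv z u v k := by
  let e : G × G ≃ G × G :=
    { toFun p := (p.2, k - p.1 - p.2)
      invFun q := (k - q.1 - q.2, q.1)
      left_inv p := by ext <;> simp
      right_inv q := by ext <;> simp; abel }
  rw [triConv, triConv, ← e.tsum_eq]
  refine tsum_congr fun p => ?_
  simp only [e, Equiv.coe_fn_mk]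
  rw [show k - p.2 - (k - p.1 - p.2) = p.1 by abel]
  ring

theorem tsum_sq_triConv_le (u v z : G → ℝ≥0∞) :
    ∑' k, triConv u v z k ^ 2 ≤ (∑' m, u m) ^ 2 * (∑' m, v m) ^ 2 * ∑' m, z m ^ 2 := by
  have hprod : ∑' p : G × G, u p.1 * v p.2 = (∑' m, u m) * ∑' m, v m := by
    rw [ENNReal.tsum_prod', ← ENNReal.tsum_mul_right]
    simp only [ENNReal.tsum_mul_left]
  have hshift : ∀ p : G × G, ∑' k, z (k - p.1 - p.2) ^ 2 = ∑' m, z m ^ 2 := fun p => by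
    simpa only [sub_sub, Equiv.subRight_apply] using
      (Equiv.subRight (p.1 + p.2)).tsum_eq (fun m => z m ^ 2)
  calc ∑' k, triConv u v z k ^ 2
      ≤ ∑' k, (∑' p : G × G, u p.1 * v p.2) *
          ∑' p : G × G, u p.1 * v p.2 * z (k - p.1 - p.2) ^ 2 :=
        ENNReal.tsum_le_tsum fun k =>
          ENNReal.sq_tsum_le_tsum_mul_tsum fun p => le_of_eq (by ring)
    _ = (∑' p : G × G, u p.1 * v p.2) * ∑' p : G × G, u p.1 * v p.2 * ∑' m, z m ^ 2 := by
        rw [ENNReal.tsum_mul_left, ENNReal.tsum_comm]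
        simp only [ENNReal.tsum_mul_left, hshift]
    _ = (∑' m, u m) ^ 2 * (∑' m, v m) ^ 2 * ∑' m, z m ^ 2 := by
        rw [ENNReal.tsum_mul_right, hprod]; ring

end TripleConvolution

section Weights

variable {r : ℝ}

noncomputable def weight (r : ℝ) (k : ℤ) : ℝ≥0∞ := ENNReal.ofReal ((1 + |(k : ℝ)|) ^ r)

noncomputable def weightedNormSq (r : ℝ) (u : ℤ → ℝ≥0∞) : ℝ≥0∞ :=
  ∑' k, (weight r k * u k) ^ 2

noncomputable def invWeightSqSum (r : ℝ) : ℝ≥0∞ := ∑' k : ℤ, (weight r k)⁻¹ ^ 2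

theorem weight_ne_zero (r : ℝ) (k : ℤ) : weight r k ≠ 0 := by
  simp only [weight, ne_eq, ENNReal.ofReal_eq_zero, not_le]
  positivity

theorem weight_ne_top (r : ℝ) (k : ℤ) : weight r k ≠ ⊤ := ENNReal.ofReal_ne_top

theorem weight_add_add_le (hr : 0 ≤ r) (a b c : ℤ) :
    weight r (a + b + c) ≤ ENNReal.ofReal (3 ^ r) * (weight r a + weight r b + weight r c) := by
  simp only [weight]
  rw [← ENNReal.ofReal_add (by positivity) (by positivity),
    ← ENNReal.ofReal_add (by positivity) (by positivity), ← ENNReal.ofReal_mul (by positivity)]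
  exact ENNReal.ofReal_le_ofReal (by exact_mod_cast one_add_abs_add_add_rpow_le hr a b c)

theorem weight_mul_triConv_le (hr : 0 ≤ r) (u v z : ℤ → ℝ≥0∞) (k : ℤ) :
    weight r k * triConv u v z k ≤ ENNReal.ofReal (3 ^ r) *
      (triConv (weight r * u) v z k + triConv u (weight r * v) z k +
        triConv u v (weight r * z) k) := by
  simp only [triConv, ← ENNReal.tsum_add, ← ENNReal.tsum_mul_left]
  refine ENNReal.tsum_le_tsum fun p => ?_
  have hk := weight_add_add_le hr p.1 p.2 (k - p.1 - p.2)
  rw [show p.1 + p.2 + (k - p.1 - p.2) = k by ring] at hk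
  calc weight r k * (u p.1 * v p.2 * z (k - p.1 - p.2))
      ≤ ENNReal.ofReal (3 ^ r) * (weight r p.1 + weight r p.2 + weight r (k - p.1 - p.2)) *
          (u p.1 * v p.2 * z (k - p.1 - p.2)) := by gcongr
    _ = _ := by simp only [Pi.mul_apply]; ring

theorem sq_tsum_le_invWeightSqSum_mul (r : ℝ) (u : ℤ → ℝ≥0∞) :
    (∑' k, u k) ^ 2 ≤ invWeightSqSum r * weightedNormSq r u :=
  ENNReal.sq_tsum_le_tsum_mul_tsum fun k => le_of_eq <| by
    rw [mul_pow, ← mul_assoc, ← mul_pow, ENNReal.inv_mul_cancel (weight_ne_zero r k)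
      (weight_ne_top r k), one_pow, one_mul]

theorem invWeightSqSum_ne_top (hr : 1 / 2 < r) : invWeightSqSum r ≠ ⊤ := by
  have hterm : ∀ k : ℤ, (weight r k)⁻¹ ^ 2 = ENNReal.ofReal ((1 + |(k : ℝ)|) ^ (-(2 * r))) :=
    fun k => by
      rw [weight, ← ENNReal.ofReal_inv_of_pos (by positivity), ← ENNReal.ofReal_pow
        (by positivity), ← Real.rpow_neg (by positivity), ← Real.rpow_natCast,
        ← Real.rpow_mul (by positivity)]
      ring_nf
  have hsum : Summable fun k : ℤ => (1 + |(k : ℝ)|) ^ (-(2 * r)) := by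
    refine (Real.summable_abs_int_rpow (b := 2 * r) (by linarith)).of_norm_bounded_eventually ?_
    filter_upwards [Filter.eventually_cofinite_ne 0] with k hk
    rw [Real.norm_of_nonneg (by positivity)]
    exact Real.rpow_le_rpow_of_nonpos (abs_pos.mpr (Int.cast_ne_zero.mpr hk)) (by linarith)
      (by linarith)
  rw [invWeightSqSum, tsum_congr hterm, ← ENNReal.ofReal_tsum_of_nonneg (fun _ => by positivity)
    hsum]
  exact ENNReal.ofReal_ne_top

theorem tsum_sq_triConv_le_invWeightSqSum (r : ℝ) (u v z : ℤ → ℝ≥0∞) :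
    ∑' k, triConv u v z k ^ 2 ≤
      invWeightSqSum r ^ 2 * (weightedNormSq r u * weightedNormSq r v * ∑' k, z k ^ 2) :=
  calc ∑' k, triConv u v z k ^ 2 ≤ (∑' m, u m) ^ 2 * (∑' m, v m) ^ 2 * ∑' m, z m ^ 2 :=
        tsum_sq_triConv_le u v z
    _ ≤ (invWeightSqSum r * weightedNormSq r u) * (invWeightSqSum r * weightedNormSq r v) *
          ∑' m, z m ^ 2 := by
        gcongr <;> exact sq_tsum_le_invWeightSqSum_mul r _
    _ = _ := by ring

theorem weightedNormSq_triConv_le (hr : 0 ≤ r) (u v z : ℤ → ℝ≥0∞) :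
    weightedNormSq r (triConv u v z) ≤ 9 * ENNReal.ofReal (3 ^ r) ^ 2 * invWeightSqSum r ^ 2 *
      (weightedNormSq r u * weightedNormSq r v * weightedNormSq r z) := by
  set C := invWeightSqSum r ^ 2 * (weightedNormSq r u * weightedNormSq r v * weightedNormSq r z)
  -- rotate each term so that the weighted factor sits in the `ℓ²` slot of Young's inequality
  have hA : ∑' k, triConv (weight r * u) v z k ^ 2 ≤ C := by
    simp only [triConv_rotate (weight r * u) v z, triConv_rotate z (weight r * u) v]
    refine (tsum_sq_triConv_le_invWeightSqSum r v z _).trans (le_of_eq ?_)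
    simp only [C, weightedNormSq, Pi.mul_apply]; ring
  have hB : ∑' k, triConv u (weight r * v) z k ^ 2 ≤ C := by
    simp only [triConv_rotate u (weight r * v) z]
    refine (tsum_sq_triConv_le_invWeightSqSum r z u _).trans (le_of_eq ?_)
    simp only [C, weightedNormSq, Pi.mul_apply]; ring
  have hC : ∑' k, triConv u v (weight r * z) k ^ 2 ≤ C :=
    tsum_sq_triConv_le_invWeightSqSum r u v _
  calc weightedNormSq r (triConv u v z)
      ≤ ∑' k, ENNReal.ofReal (3 ^ r) ^ 2 * (3 * (triConv (weight r * u) v z k ^ 2 +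
          triConv u (weight r * v) z k ^ 2 + triConv u v (weight r * z) k ^ 2)) :=
        ENNReal.tsum_le_tsum fun k => by
          refine (pow_le_pow_left' (weight_mul_triConv_le hr u v z k) 2).trans ?_
          rw [mul_pow]
          gcongr
          exact ENNReal.add_add_sq_le _ _ _
    _ ≤ ENNReal.ofReal (3 ^ r) ^ 2 * (3 * (C + C + C)) := by
        rw [ENNReal.tsum_mul_left, ENNReal.tsum_mul_left, ENNReal.tsum_add, ENNReal.tsum_add]
        gcongr
    _ = _ := by ring

theorem weightedNormSq_le_of_le {u v : ℤ → ℝ≥0∞} {c : ℝ≥0∞} (h : ∀ k, u k ≤ c * v k) :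
    weightedNormSq r u ≤ c ^ 2 * weightedNormSq r v := by
  rw [weightedNormSq, weightedNormSq, ← ENNReal.tsum_mul_left]
  refine ENNReal.tsum_le_tsum fun k => ?_
  rw [← mul_pow, mul_left_comm]
  gcongr
  exact h k

theorem weightedNormSq_add_add_le (u v z : ℤ → ℝ≥0∞) :
    weightedNormSq r (u + v + z) ≤
      3 * (weightedNormSq r u + weightedNormSq r v + weightedNormSq r z) := by
  simp only [weightedNormSq, ← ENNReal.tsum_add, ← ENNReal.tsum_mul_left]
  refine ENNReal.tsum_le_tsum fun k => ?_
  simpa only [Pi.add_apply, mul_add] using ENNReal.add_add_sq_le _ _ _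

noncomputable def cubicConst (r : ℝ) : ℝ≥0∞ :=
  81 * ENNReal.ofReal (3 ^ r) ^ 2 * invWeightSqSum r ^ 2

theorem cubicConst_ne_top (hr : 1 / 2 < r) : cubicConst r ≠ ⊤ := by
  have := invWeightSqSum_ne_top hr
  unfold cubicConst
  finiteness

theorem weightedNormSq_cubic_le (hr : 0 ≤ r) (a b d : ℤ → ℝ≥0∞) :
    weightedNormSq r (triConv d a a + triConv b d a + triConv b b d) ≤
      cubicConst r * ((weightedNormSq r a + weightedNormSq r b) ^ 2 * weightedNormSq r d) := by
  set S := weightedNormSq r a + weightedNormSq r b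
  have ha : weightedNormSq r a ≤ S := le_self_add
  have hb : weightedNormSq r b ≤ S := le_add_self
  refine (weightedNormSq_add_add_le _ _ _).trans ?_
  grw [weightedNormSq_triConv_le hr, weightedNormSq_triConv_le hr, weightedNormSq_triConv_le hr,
    ha, hb]
  exact le_of_eq (by rw [cubicConst]; ring)

theorem wnorm_nonneg (r : ℝ) (γ : ℤ → ℂ) : 0 ≤ wnorm r γ := Real.sqrt_nonneg _

theorem weight_mul_enorm_sq (r : ℝ) (k : ℤ) (x : ℂ) :
    (weight r k * ‖x‖ₑ) ^ 2 = ENNReal.ofReal ((1 + |(k : ℝ)|) ^ (2 * r) * ‖x‖ ^ 2) := by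
  rw [weight, ← ofReal_norm, ← ENNReal.ofReal_mul (by positivity), ← ENNReal.ofReal_pow
    (by positivity), mul_pow, ← Real.rpow_natCast, ← Real.rpow_mul (by positivity)]
  norm_num [mul_comm]

theorem weightedNormSq_enorm (r : ℝ) (γ : ℤ → ℂ) :
    weightedNormSq r (fun k => ‖γ k‖ₑ) =
      ∑' k : ℤ, ENNReal.ofReal ((1 + |(k : ℝ)|) ^ (2 * r) * ‖γ k‖ ^ 2) :=
  tsum_congr fun k => weight_mul_enorm_sq r k (γ k)

theorem wnorm_eq_sqrt_toReal (r : ℝ) (γ : ℤ → ℂ) :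
    wnorm r γ = √(weightedNormSq r fun k => ‖γ k‖ₑ).toReal := by
  rw [weightedNormSq_enorm, ENNReal.tsum_toReal_eq fun _ => ENNReal.ofReal_ne_top, wnorm]
  exact congrArg _ (tsum_congr fun k => (ENNReal.toReal_ofReal (by positivity)).symm)

theorem weightedNormSq_enorm_eq_ofReal {γ : ℤ → ℂ}
    (hγ : Summable fun k : ℤ => (1 + |(k : ℝ)|) ^ (2 * r) * ‖γ k‖ ^ 2) :
    weightedNormSq r (fun k => ‖γ k‖ₑ) = ENNReal.ofReal (wnorm r γ ^ 2) := by
  rw [weightedNormSq_enorm, ← ENNReal.ofReal_tsum_of_nonneg (fun _ => by positivity) hγ, wnorm,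
    Real.sq_sqrt (tsum_nonneg fun _ => by positivity)]

theorem wnorm_le_of_weightedNormSq_le {γ : ℤ → ℂ} {x : ℝ} (hx : 0 ≤ x)
    (h : weightedNormSq r (fun k => ‖γ k‖ₑ) ≤ ENNReal.ofReal (x ^ 2)) : wnorm r γ ≤ x := by
  rw [wnorm_eq_sqrt_toReal, ← Real.sqrt_sq hx]
  exact Real.sqrt_le_sqrt (ENNReal.toReal_le_of_le_ofReal (by positivity) h)

theorem summable_weight_mul_norm_sub_sq {α β : ℤ → ℂ}
    (hα : Summable fun k : ℤ => (1 + |(k : ℝ)|) ^ (2 * r) * ‖α k‖ ^ 2)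
    (hβ : Summable fun k : ℤ => (1 + |(k : ℝ)|) ^ (2 * r) * ‖β k‖ ^ 2) :
    Summable fun k : ℤ => (1 + |(k : ℝ)|) ^ (2 * r) * ‖α k - β k‖ ^ 2 := by
  refine .of_nonneg_of_le (fun _ => by positivity) (fun k => ?_) ((hα.add hβ).mul_left 2)
  calc (1 + |(k : ℝ)|) ^ (2 * r) * ‖α k - β k‖ ^ 2
      ≤ (1 + |(k : ℝ)|) ^ (2 * r) * (2 * (‖α k‖ ^ 2 + ‖β k‖ ^ 2)) := by
        gcongr
        exact (pow_le_pow_left₀ (norm_nonneg _) (norm_sub_le _ _) 2).trans add_sq_le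
    _ = _ := by ring

theorem ne_top_of_weightedNormSq_ne_top {u : ℤ → ℝ≥0∞} (h : weightedNormSq r u ≠ ⊤) (k : ℤ) :
    u k ≠ ⊤ := by
  intro hu
  have hk := ENNReal.le_tsum (f := fun k => (weight r k * u k) ^ 2) k
  simp only [hu, ENNReal.mul_top (weight_ne_zero r k), ENNReal.top_pow two_ne_zero,
    top_le_iff] at hk
  exact h hk

noncomputable def integratorTerm (τ : ℝ) (α β : ℤ → ℂ) (k : ℤ) (p : ℤ × ℤ) : ℂ :=
  ((starRingEnd ℂ) (α p.1) * α p.2 * α (k - p.1 - p.2)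
      - (starRingEnd ℂ) (β p.1) * β p.2 * β (k - p.1 - p.2)) *
    ∫ s in (0 : ℝ)..τ, Complex.exp (2 * Complex.I * s * ((p.2 * (k - p.1 - p.2) : ℤ) : ℂ))

theorem tsum_enorm_integratorTerm_le {τ : ℝ} (hτ : 0 ≤ τ) (α β : ℤ → ℂ) (k : ℤ) :
    ∑' p, ‖integratorTerm τ α β k p‖ₑ ≤ ENNReal.ofReal τ *
      (triConv (fun m => ‖α m - β m‖ₑ) (fun m => ‖α m‖ₑ) (fun m => ‖α m‖ₑ) +
        triConv (fun m => ‖β m‖ₑ) (fun m => ‖α m - β m‖ₑ) (fun m => ‖α m‖ₑ) +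
        triConv (fun m => ‖β m‖ₑ) (fun m => ‖β m‖ₑ) (fun m => ‖α m - β m‖ₑ)) k := by
  simp only [Pi.add_apply, triConv, ← ENNReal.tsum_add, ← ENNReal.tsum_mul_left]
  refine ENNReal.tsum_le_tsum fun p => ?_
  rw [integratorTerm, enorm_mul, mul_comm]
  gcongr
  · rw [← ofReal_norm]
    exact ENNReal.ofReal_le_ofReal (norm_integral_exp_two_mul_I_le hτ _)
  · refine (enorm_mul_mul_sub_mul_mul_le _ _ _ _ _ _).trans_eq ?_
    simp only [← map_sub, RCLike.enorm_conj]

theorem summable_norm_integratorTerm (hr : 1 / 2 < r) {τ : ℝ} (hτ : 0 ≤ τ) {α β : ℤ → ℂ}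
    (hα : Summable fun k : ℤ => (1 + |(k : ℝ)|) ^ (2 * r) * ‖α k‖ ^ 2)
    (hβ : Summable fun k : ℤ => (1 + |(k : ℝ)|) ^ (2 * r) * ‖β k‖ ^ 2) (k : ℤ) :
    Summable fun p => ‖integratorTerm τ α β k p‖ := by
  have hbound := weightedNormSq_cubic_le (r := r) (by linarith) (fun m => ‖α m‖ₑ)
    (fun m => ‖β m‖ₑ) (fun m => ‖α m - β m‖ₑ)
  rw [weightedNormSq_enorm_eq_ofReal hα, weightedNormSq_enorm_eq_ofReal hβ,
    weightedNormSq_enorm_eq_ofReal (summable_weight_mul_norm_sub_sq hα hβ)] at hbound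
  have hk := ne_top_of_weightedNormSq_ne_top
    (ne_top_of_le_ne_top (by have := cubicConst_ne_top hr; finiteness) hbound) k
  have hfin : ∑' p, ‖integratorTerm τ α β k p‖ₑ ≠ ⊤ :=
    ne_top_of_le_ne_top (by finiteness) (tsum_enorm_integratorTerm_le hτ α β k)
  exact (ENNReal.summable_toReal hfin).congr fun p => toReal_enorm _

theorem weightedNormSq_integrator_le (hr : 0 ≤ r) {τ : ℝ} (hτ : 0 ≤ τ) (α β : ℤ → ℂ) :
    weightedNormSq r (fun k => ‖∑' p, integratorTerm τ α β k p‖ₑ) ≤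
      ENNReal.ofReal τ ^ 2 * (cubicConst r * ((weightedNormSq r (fun k => ‖α k‖ₑ) +
        weightedNormSq r (fun k => ‖β k‖ₑ)) ^ 2 * weightedNormSq r (fun k => ‖α k - β k‖ₑ))) :=
  (weightedNormSq_le_of_le fun k => enorm_tsum_le_tsum_enorm.trans
    (tsum_enorm_integratorTerm_le hτ α β k)).trans
      (by gcongr; exact weightedNormSq_cubic_le hr _ _ _)

theorem wnorm_integrator_le (hr : 1 / 2 < r) {τ : ℝ} (hτ : 0 ≤ τ) {α β : ℤ → ℂ}
    (hα : Summable fun k : ℤ => (1 + |(k : ℝ)|) ^ (2 * r) * ‖α k‖ ^ 2)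
    (hβ : Summable fun k : ℤ => (1 + |(k : ℝ)|) ^ (2 * r) * ‖β k‖ ^ 2) :
    wnorm r (fun k => ∑' p, integratorTerm τ α β k p) ≤ √(cubicConst r).toReal * τ *
      (wnorm r α ^ 2 + wnorm r β ^ 2) * wnorm r (fun k => α k - β k) := by
  have := wnorm_nonneg r (fun k => α k - β k)
  refine wnorm_le_of_weightedNormSq_le (by positivity)
    ((weightedNormSq_integrator_le (by linarith) hτ α β).trans_eq ?_)
  rw [weightedNormSq_enorm_eq_ofReal hα, weightedNormSq_enorm_eq_ofReal hβ,
    weightedNormSq_enorm_eq_ofReal (summable_weight_mul_norm_sub_sq hα hβ),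
    ← ENNReal.ofReal_toReal (cubicConst_ne_top hr), ← ENNReal.ofReal_add (by positivity)
    (by positivity), ← ENNReal.ofReal_pow hτ, ← ENNReal.ofReal_pow (by positivity),
    ← ENNReal.ofReal_mul (by positivity), ← ENNReal.ofReal_mul (by positivity),
    ← ENNReal.ofReal_mul (by positivity), ENNReal.toReal_ofReal ENNReal.toReal_nonneg]
  congr 1
  rw [mul_pow, mul_pow, mul_pow, Real.sq_sqrt ENNReal.toReal_nonneg]
  ring

end Weights

end FourierIntegrator

open FourierIntegrator in
theorem stmt11 (r : ℝ) (hr : 1 / 2 < r) :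
    ∃ c > 0, ∀ τ : ℝ, 0 ≤ τ → ∀ α β : ℤ → ℂ,
      Summable (fun k : ℤ => (1 + |(k : ℝ)|) ^ (2 * r) * Norm.norm (α k) ^ 2) →
      Summable (fun k : ℤ => (1 + |(k : ℝ)|) ^ (2 * r) * Norm.norm (β k) ^ 2) →
      (∀ k : ℤ, Summable (fun p : ℤ × ℤ =>
        Norm.norm (((starRingEnd ℂ) (α p.1) * α p.2 * α (k - p.1 - p.2)
            - (starRingEnd ℂ) (β p.1) * β p.2 * β (k - p.1 - p.2)) *
          ∫ s in (0 : ℝ)..τ, Complex.exp (2 * Complex.I * s * ((p.2 * (k - p.1 - p.2) : ℤ) : ℂ))))) ∧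
      wnorm r (fun k : ℤ => ∑' p : ℤ × ℤ,
          ((starRingEnd ℂ) (α p.1) * α p.2 * α (k - p.1 - p.2)
            - (starRingEnd ℂ) (β p.1) * β p.2 * β (k - p.1 - p.2)) *
          ∫ s in (0 : ℝ)..τ, Complex.exp (2 * Complex.I * s * ((p.2 * (k - p.1 - p.2) : ℤ) : ℂ)))
        ≤ c * τ * (wnorm r α + wnorm r β) ^ 2 * wnorm r (fun k => α k - β k) := by
  refine ⟨√(cubicConst r).toReal + 1, by positivity, fun τ hτ α β hα hβ =>
    ⟨summable_norm_integratorTerm hr hτ hα hβ, ?_⟩⟩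
  have hA := wnorm_nonneg r α
  have hB := wnorm_nonneg r β
  have hD := wnorm_nonneg r (fun k => α k - β k)
  have hAB : wnorm r α ^ 2 + wnorm r β ^ 2 ≤ (wnorm r α + wnorm r β) ^ 2 := by nlinarith
  refine (wnorm_integrator_le hr hτ hα hβ).trans ?_
  gcongr
  exact le_add_of_nonneg_right zero_le_one
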